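/- arXiv:1201.3861 — 2 statements merged into one kernel-verified Lean document; each statement's English description precedes it below -/
import Mathlib

section
/- For a finite simple graph H on n vertices and k ≥ 0, the chromatic coefficient e_k(H) (defined by ch_H(z) = Σ_k (-1)^k e_k(H) z^{n-k}) equals Σ over isomorphism classes of graphs G without isolated vertices with |V(G)| - c(G) = k of (-1)^{|E(G)|+k} inj(G,H)/|Aut(G)|, where inj(G,H) is the number of injective graph homomorphisms from G to H, c(G) the number of connected components, and Aut(G) the automorphism group of G. -/
/-!
Inclusion–exclusion over the edges of `H` gives Whitney's expansion
`ch_H(q) = Σ_{S ⊆ E(H)} (-1)^|S| q^{c(W, S)}`. An edge set `S` is the same thing as a subgraph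
`G_S` of `H` without isolated vertices, and the isolated vertices of `(W, S)` are its remaining
components, so `n - c(W, S) = |V(G_S)| - c(G_S)`: the coefficient of `q^{n-k}` is the signed
count of the subgraphs of `H` lying in `𝒢(k)`. Grouped by isomorphism type, the class of `G`
contributes `(-1)^{|E(G)|}` times the number of copies of `G` in `H`, and that number is
`inj(G, H) / |Aut(G)|` because two embeddings with the same image differ by an automorphism.
-/

open Polynomial Finset

/-- The number of proper colorings of `G` with `q` colors. -/
noncomputable def properColorings {V : Type*} (G : SimpleGraph V) (q : ℕ) : ℕ :=
  Nat.card {f : V → Fin q // ∀ ⦃x y⦄, G.Adj x y → f x ≠ f y}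

/-- The number of injective graph homomorphisms from `G` to `H`. -/
noncomputable def injCount {α β : Type*} (G : SimpleGraph α) (H : SimpleGraph β) : ℕ :=
  Nat.card {f : G →g H // Function.Injective f}

/-- A graph has no isolated vertices if every vertex has a neighbour. -/
def NoIsolated {α : Type*} (G : SimpleGraph α) : Prop := ∀ v, ∃ u, G.Adj v u

theorem Polynomial.coeff_eq_sum_filter_of_eval_natCast {R ι : Type*} [CommRing R] [IsDomain R]
    [CharZero R] {P : R[X]} (s : Finset ι) (a : ι → R) (d : ι → ℕ)
    (h : ∀ q : ℕ, P.eval (q : R) = ∑ x ∈ s, a x * (q : R) ^ d x) (j : ℕ) :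
    P.coeff j = ∑ x ∈ s with d x = j, a x := by
  have hP : P = ∑ x ∈ s, C (a x) * X ^ d x := by
    refine eq_of_infinite_eval_eq _ _ ((Set.infinite_range_of_injective Nat.cast_injective).mono ?_)
    rintro _ ⟨q, rfl⟩
    simp [h q, eval_finsetSum]
  rw [hP, finsetSum_coeff, Finset.sum_filter]
  simp only [coeff_C_mul_X_pow, eq_comm]

namespace SimpleGraph

variable {V V' W : Type*}

lemma Walk.apply_eq_of_forall_adj {G : SimpleGraph V} {β : Type*} {f : V → β}
    (hf : ∀ v w, G.Adj v w → f v = f w) {u v : V} (p : G.Walk u v) : f u = f v := by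
  induction p with
  | nil => rfl
  | cons h _ ih => exact (hf _ _ h).trans ih

def ConnectedComponent.liftEquiv (G : SimpleGraph V) (α : Type*) :
    {f : V → α // ∀ v w, G.Adj v w → f v = f w} ≃ (G.ConnectedComponent → α) where
  toFun f := ConnectedComponent.lift f.1 fun _ _ p _ => p.apply_eq_of_forall_adj f.2
  invFun g := ⟨fun v => g (G.connectedComponentMk v), fun _ _ h =>
    congrArg g (ConnectedComponent.sound h.reachable)⟩
  left_inv _ := rfl
  right_inv _ := funext fun c => c.ind fun _ => rfl

lemma card_fun_eq_on_adj [Finite V] (G : SimpleGraph V) (α : Type*) :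
    Nat.card {f : V → α // ∀ v w, G.Adj v w → f v = f w} =
      Nat.card α ^ Nat.card G.ConnectedComponent := by
  rw [Nat.card_congr (ConnectedComponent.liftEquiv G α), Nat.card_fun]

namespace Subgraph

variable {G : SimpleGraph V}

lemma support_walk_subset_verts (G' : G.Subgraph) {u v : V} (p : G'.spanningCoe.Walk u v)
    (hu : u ∈ G'.verts) : ∀ x ∈ p.support, x ∈ G'.verts := by
  induction p with
  | nil => simpa using hu
  | cons h _ ih => simpa [hu] using ih (G'.edge_vert h.symm)

lemma eq_of_reachable_of_notMem_verts (G' : G.Subgraph) {u v : V}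
    (h : G'.spanningCoe.Reachable u v) (hu : u ∉ G'.verts) : u = v := by
  obtain ⟨p⟩ := h
  cases p with
  | nil => rfl
  | cons h _ => exact absurd (G'.edge_vert h) hu

lemma reachable_coe_of_reachable_spanningCoe (G' : G.Subgraph) {u v : G'.verts}
    (h : G'.spanningCoe.Reachable u v) : G'.coe.Reachable u v := by
  obtain ⟨p⟩ := h
  exact ⟨(p.induce G'.verts (G'.support_walk_subset_verts p u.2)).map ⟨id, id⟩⟩

/-- The vertices outside `G'.verts` are isolated in `G'.spanningCoe`, each forming its own
component. -/
noncomputable def connectedComponentSpanningCoeEquiv (G' : G.Subgraph) :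
    G'.coe.ConnectedComponent ⊕ ↥G'.vertsᶜ ≃ G'.spanningCoe.ConnectedComponent :=
  Equiv.ofBijective
    (Sum.elim (ConnectedComponent.map G'.coeEmbeddingSpanningCoe.toHom)
      fun v => G'.spanningCoe.connectedComponentMk v) <| by
    have mem_of_reachable {u : G'.verts} {v : V} (h : G'.spanningCoe.Reachable v u) :
        v ∈ G'.verts := by
      by_contra hv
      exact hv (G'.eq_of_reachable_of_notMem_verts h hv ▸ u.2)
    refine ⟨?_, fun c => c.ind fun v => ?_⟩
    · rintro (c | v) (c' | v') h
      · induction c, c' using ConnectedComponent.ind₂ with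
        | h u u' =>
          simp only [Sum.elim_inl, ConnectedComponent.map_mk] at h
          exact congrArg Sum.inl <| ConnectedComponent.sound <|
            G'.reachable_coe_of_reachable_spanningCoe (ConnectedComponent.exact h)
      · induction c using ConnectedComponent.ind with
        | h u => exact absurd (mem_of_reachable (ConnectedComponent.exact h).symm) v'.2
      · induction c' using ConnectedComponent.ind with
        | h u => exact absurd (mem_of_reachable (ConnectedComponent.exact h)) v.2
      · exact congrArg Sum.inr <| Subtype.ext <|
          G'.eq_of_reachable_of_notMem_verts (ConnectedComponent.exact h) v.2
    · by_cases hv : v ∈ G'.verts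
      · exact ⟨.inl (G'.coe.connectedComponentMk ⟨v, hv⟩), rfl⟩
      · exact ⟨.inr ⟨v, hv⟩, rfl⟩

theorem card_connectedComponent_spanningCoe [Finite V] (G' : G.Subgraph) :
    Nat.card G'.spanningCoe.ConnectedComponent =
      Nat.card G'.coe.ConnectedComponent + Nat.card ↥G'.vertsᶜ := by
  rw [← Nat.card_sum, Nat.card_congr G'.connectedComponentSpanningCoeEquiv]

lemma card_edgeSet_coe (G' : G.Subgraph) : Nat.card G'.coe.edgeSet = Nat.card G'.edgeSet := by
  rw [← G'.image_coe_edgeSet_coe,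
    Nat.card_image_of_injective (Sym2.map.injective Subtype.val_injective)]

end Subgraph

section SubgraphOfEdges

variable {G : SimpleGraph V}

@[simps]
def subgraphOfEdges (G : SimpleGraph V) (t : Set (Sym2 V)) : G.Subgraph where
  verts := {v | ∃ w, G.Adj v w ∧ s(v, w) ∈ t}
  Adj v w := G.Adj v w ∧ s(v, w) ∈ t
  adj_sub h := h.1
  edge_vert h := ⟨_, h⟩
  symm := ⟨fun _ _ h => ⟨h.1.symm, Sym2.eq_swap ▸ h.2⟩⟩

lemma edgeSet_subgraphOfEdges (t : Set (Sym2 V)) :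
    (G.subgraphOfEdges t).edgeSet = t ∩ G.edgeSet := by
  ext e
  induction e using Sym2.ind
  simp [and_comm]

lemma spanningCoe_subgraphOfEdges {t : Set (Sym2 V)} (ht : t ⊆ G.edgeSet) :
    (G.subgraphOfEdges t).spanningCoe = fromEdgeSet t := by
  ext v w
  simp only [Subgraph.spanningCoe_adj, subgraphOfEdges_adj, fromEdgeSet_adj]
  exact ⟨fun h => ⟨h.2, h.1.ne⟩, fun h => ⟨ht h.1, h.1⟩⟩

lemma noIsolated_coe_subgraphOfEdges (t : Set (Sym2 V)) :
    NoIsolated (G.subgraphOfEdges t).coe := fun v => by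
  obtain ⟨w, h⟩ := v.2
  exact ⟨⟨w, (G.subgraphOfEdges t).edge_vert (Subgraph.adj_symm _ h)⟩, h⟩

lemma subgraphOfEdges_edgeSet {G' : G.Subgraph} (hG' : NoIsolated G'.coe) :
    G.subgraphOfEdges G'.edgeSet = G' := by
  ext v
  · refine ⟨fun ⟨w, _, h⟩ => G'.edge_vert h, fun hv => ?_⟩
    obtain ⟨w, h⟩ := hG' ⟨v, hv⟩
    exact ⟨w, G'.adj_sub h, h⟩
  · simp only [subgraphOfEdges_adj, Subgraph.mem_edgeSet]
    exact ⟨And.right, fun h => ⟨G'.adj_sub h, h⟩⟩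

end SubgraphOfEdges

section Whitney

variable [Fintype W] [DecidableEq W] (H : SimpleGraph W) [DecidableRel H.Adj]

theorem properColorings_eq_sum_powerset (q : ℕ) :
    (properColorings H q : ℤ) = ∑ t ∈ H.edgeFinset.powerset,
      (-1) ^ #t * (q : ℤ) ^ Nat.card (fromEdgeSet (t : Set (Sym2 W))).ConnectedComponent := by
  let mono : Sym2 W → Finset (W → Fin q) := fun e => {f | (e.map f).IsDiag}
  have hproper : properColorings H q = #(H.edgeFinset.inf fun e => (mono e)ᶜ) := by
    rw [properColorings, Nat.card_eq_fintype_card, Fintype.card_subtype]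
    congr 1
    ext f
    simp [mono, Finset.mem_inf, Sym2.forall]
  have hmono (t : Finset (Sym2 W)) :
      #(t.inf mono) = q ^ Nat.card (fromEdgeSet (t : Set (Sym2 W))).ConnectedComponent := by
    have := card_fun_eq_on_adj (fromEdgeSet (t : Set (Sym2 W))) (Fin q)
    rw [Nat.card_fin, Nat.card_eq_fintype_card, Fintype.card_subtype] at this
    rw [← this]
    congr 1
    ext f
    simp only [mono, Finset.mem_inf, Finset.mem_filter, Finset.mem_univ, true_and, Sym2.forall,
      Sym2.map_mk, Sym2.mk_isDiag_iff, fromEdgeSet_adj, Finset.mem_coe]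
    exact ⟨fun h v w hvw => h v w hvw.1, fun h v w hvw =>
      (eq_or_ne v w).elim (congrArg f) fun hne => h v w ⟨hvw, hne⟩⟩
  rw [hproper, inclusion_exclusion_card_inf_compl]
  simp only [hmono, Nat.cast_pow]

open Classical in
theorem sum_powerset_edgeFinset_eq_sum_subgraph {M : Type*} [AddCommMonoid M]
    (g : ℕ → SimpleGraph W → M) :
    ∑ t ∈ H.edgeFinset.powerset, g #t (fromEdgeSet ↑t) =
      ∑ G' : H.Subgraph with NoIsolated G'.coe, g (Nat.card G'.edgeSet) G'.spanningCoe := by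
  have subset_edgeSet {t : Finset (Sym2 W)} (ht : t ∈ H.edgeFinset.powerset) :
      (t : Set (Sym2 W)) ⊆ H.edgeSet := by
    rw [← coe_edgeFinset, Finset.coe_subset]
    exact Finset.mem_powerset.mp ht
  have edgeSet_eq {t : Finset (Sym2 W)} (ht : t ∈ H.edgeFinset.powerset) :
      (H.subgraphOfEdges ↑t).edgeSet = ↑t := by
    rw [edgeSet_subgraphOfEdges, Set.inter_eq_left.mpr (subset_edgeSet ht)]
  refine Finset.sum_nbij' (fun t => H.subgraphOfEdges ↑t) (fun G' => G'.edgeSet.toFinset)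
    (fun t _ => ?_) (fun G' _ => ?_) (fun t ht => ?_) (fun G' hG' => ?_) (fun t ht => ?_)
  · simpa using noIsolated_coe_subgraphOfEdges (G := H) ↑t
  · simpa [← coe_edgeFinset] using G'.edgeSet_subset
  · simp [edgeSet_eq ht]
  · simpa using subgraphOfEdges_edgeSet (Finset.mem_filter.mp hG').2
  · rw [edgeSet_eq ht, Nat.card_coe_set_eq, Set.ncard_coe_finset,
      spanningCoe_subgraphOfEdges (subset_edgeSet ht)]

open Classical in
theorem properColorings_eq_sum_subgraph (q : ℕ) :
    (properColorings H q : ℤ) = ∑ G' : H.Subgraph with NoIsolated G'.coe,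
      (-1) ^ Nat.card G'.edgeSet * (q : ℤ) ^ Nat.card G'.spanningCoe.ConnectedComponent := by
  rw [properColorings_eq_sum_powerset, sum_powerset_edgeFinset_eq_sum_subgraph H
    fun m F => (-1) ^ m * (q : ℤ) ^ Nat.card F.ConnectedComponent]

open Classical in
theorem coeff_card_sub_eq_sum_subgraph {R : Type*} [CommRing R] [IsDomain R] [CharZero R]
    {P : R[X]} (hP : ∀ q : ℕ, P.eval (q : R) = properColorings H q) {k : ℕ}
    (hk : k ≤ Fintype.card W) :
    P.coeff (Fintype.card W - k) = ∑ G' : H.Subgraph with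
      NoIsolated G'.coe ∧ Nat.card G'.verts - Nat.card G'.coe.ConnectedComponent = k,
      (-1) ^ Nat.card G'.edgeSet := by
  rw [P.coeff_eq_sum_filter_of_eval_natCast {G' : H.Subgraph | NoIsolated G'.coe}
    (fun G' => (-1) ^ Nat.card G'.edgeSet)
    (fun G' => Nat.card G'.spanningCoe.ConnectedComponent) (fun q => ?_), Finset.filter_filter]
  · refine Finset.sum_congr (Finset.filter_congr fun G' _ => and_congr_right fun _ => ?_)
      fun _ _ => rfl
    have hcomp := G'.card_connectedComponent_spanningCoe
    have hverts : Nat.card G'.verts + Nat.card ↥G'.vertsᶜ = Fintype.card W := by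
      rw [Nat.card_coe_set_eq, Nat.card_coe_set_eq, Set.ncard_add_ncard_compl,
        Nat.card_eq_fintype_card]
    have hcoe : Nat.card G'.coe.ConnectedComponent ≤ Nat.card G'.verts :=
      Nat.card_le_card_of_surjective _ fun c => c.ind fun v => ⟨v, rfl⟩
    omega
  · rw [hP, ← Int.cast_natCast, properColorings_eq_sum_subgraph]
    push_cast
    rfl

end Whitney

namespace Copy

variable {A : SimpleGraph V} {B : SimpleGraph W}

@[simp] lemma coe_isoToSubgraph_apply (f : Copy A B) (a : V) :
    (f.isoToSubgraph a : W) = f a :=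
  rfl

lemma exists_iso_comp_eq_of_toSubgraph_eq {f g : Copy A B} (h : f.toSubgraph = g.toSubgraph) :
    ∃ σ : A ≃g A, ∀ a, g (σ a) = f a := by
  let e : f.toSubgraph.coe ≃g g.toSubgraph.coe :=
    ⟨Equiv.setCongr (congrArg Subgraph.verts h), fun {_ _} => by simp [h]⟩
  refine ⟨f.isoToSubgraph.trans (e.trans g.isoToSubgraph.symm), fun a => ?_⟩
  rw [← coe_isoToSubgraph_apply g]
  simp [e]

lemma toSubgraph_comp_iso (f : Copy A B) (σ : A ≃g A) :
    (f.comp σ.toCopy).toSubgraph = f.toSubgraph := by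
  ext x y
  · simp only [Subgraph.map_verts, Subgraph.verts_top, Set.image_univ, Set.mem_range]
    exact (σ.surjective.exists (p := fun a => f a = x)).symm
  · simp only [Subgraph.map_adj, Relation.Map, Subgraph.top_adj]
    constructor
    · rintro ⟨a, b, hab, rfl, rfl⟩
      exact ⟨σ a, σ b, σ.map_adj_iff.mpr hab, rfl, rfl⟩
    · rintro ⟨a, b, hab, rfl, rfl⟩
      exact ⟨σ.symm a, σ.symm b, σ.symm.map_adj_iff.mpr hab, by simp, by simp⟩

noncomputable def isoEquivToSubgraphEq (f : Copy A B) :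
    (A ≃g A) ≃ {g : Copy A B // g.toSubgraph = f.toSubgraph} :=
  Equiv.ofBijective (fun σ => ⟨f.comp σ.toCopy, f.toSubgraph_comp_iso σ⟩) <| by
    refine ⟨fun σ τ h => ?_, fun ⟨g, hg⟩ => ?_⟩
    · ext a
      exact f.injective (DFunLike.congr_fun (congrArg Subtype.val h) a)
    · obtain ⟨σ, hσ⟩ := exists_iso_comp_eq_of_toSubgraph_eq hg
      exact ⟨σ, Subtype.ext (Copy.ext hσ)⟩

end Copy

theorem labelledCopyCount_eq_copyCount_mul_card_iso [Fintype V] [Fintype W]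
    (G : SimpleGraph V) (H : SimpleGraph W) :
    G.labelledCopyCount H = G.copyCount H * Nat.card (H ≃g H) := by
  classical
  rw [labelledCopyCount, copyCount_eq_card_image_copyToSubgraph, ← Finset.card_univ,
    Finset.card_eq_sum_card_image Copy.toSubgraph, Finset.sum_const_nat]
  rintro _ hG'
  obtain ⟨f, -, rfl⟩ := Finset.mem_image.mp hG'
  rw [← Nat.card_congr f.isoEquivToSubgraphEq.symm, Nat.card_eq_fintype_card,
    Fintype.card_subtype]

instance [Finite V] [Finite V'] {G : SimpleGraph V} {G' : SimpleGraph V'} : Finite (G ≃g G') :=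
  .of_injective _ DFunLike.coe_injective

lemma injCount_eq_labelledCopyCount [Fintype V] [Fintype W] (G : SimpleGraph V)
    (H : SimpleGraph W) : injCount G H = H.labelledCopyCount G := by
  classical
  rw [injCount, labelledCopyCount, ← Nat.card_eq_fintype_card]
  exact Nat.card_congr ⟨fun f => ⟨f.1, f.2⟩, fun f => ⟨f.toHom, f.injective⟩, fun _ => rfl,
    fun _ => rfl⟩

lemma injCount_div_card_iso {K : Type*} [DivisionRing K] [CharZero K] [Fintype V] [Fintype W]
    (G : SimpleGraph V) (H : SimpleGraph W) :
    (injCount G H : K) / Nat.card (G ≃g G) = H.copyCount G := by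
  have : Nonempty (G ≃g G) := ⟨.refl⟩
  rw [injCount_eq_labelledCopyCount, labelledCopyCount_eq_copyCount_mul_card_iso, Nat.cast_mul,
    mul_div_cancel_right₀ _ (Nat.cast_ne_zero.mpr Nat.card_pos.ne')]

lemma copyCount_eq_card_subtype [Fintype V] (G : SimpleGraph V) (H : SimpleGraph W) :
    G.copyCount H = Nat.card {G' : G.Subgraph // Nonempty (H ≃g G'.coe)} := by
  classical
  rw [copyCount, Nat.card_eq_fintype_card, Fintype.card_subtype]

lemma _root_.NoIsolated.of_iso {G : SimpleGraph V} {G' : SimpleGraph V'} (e : G ≃g G')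
    (hG : NoIsolated G) : NoIsolated G' := fun v => by
  obtain ⟨u, hu⟩ := hG (e.symm v)
  exact ⟨e u, by simpa using e.map_adj_iff.mpr hu⟩

lemma Iso.card_edgeSet_eq {G : SimpleGraph V} {G' : SimpleGraph V'} (e : G ≃g G') :
    Nat.card G.edgeSet = Nat.card G'.edgeSet :=
  Nat.card_congr e.mapEdgeSet

lemma Iso.card_sub_card_connectedComponent_eq {G : SimpleGraph V} {G' : SimpleGraph V'}
    (e : G ≃g G') :
    Nat.card V - Nat.card G.ConnectedComponent = Nat.card V' - Nat.card G'.ConnectedComponent := by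
  rw [Nat.card_congr e.toEquiv, Nat.card_congr e.connectedComponentEquiv]

open Classical in
theorem card_filter_nonempty_iso_rep {k : ℕ} {ι : Type*} [Fintype ι]
    {rep : ι → Σ m : ℕ, SimpleGraph (Fin m)}
    (hrep : ∀ i, NoIsolated (rep i).2 ∧ (rep i).1 - Nat.card (rep i).2.ConnectedComponent = k)
    (hrep' : ∀ (m : ℕ) (G : SimpleGraph (Fin m)), NoIsolated G →
      m - Nat.card G.ConnectedComponent = k → ∃! i : ι, Nonempty (G ≃g (rep i).2))
    [Fintype V] (G : SimpleGraph V) :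
    #{i | Nonempty ((rep i).2 ≃g G)} =
      if NoIsolated G ∧ Nat.card V - Nat.card G.ConnectedComponent = k then 1 else 0 := by
  split_ifs with hG
  · let e := G.overFinIso rfl
    obtain ⟨i, ⟨σ⟩, hi⟩ := hrep' _ _ (hG.1.of_iso e)
      (by simpa using e.card_sub_card_connectedComponent_eq.symm.trans hG.2)
    refine Finset.card_eq_one.mpr ⟨i, Finset.ext fun j => ?_⟩
    simp only [Finset.mem_filter, Finset.mem_univ, true_and, Finset.mem_singleton]
    exact ⟨fun ⟨τ⟩ => hi j ⟨e.symm.trans τ.symm⟩, fun hj => hj ▸ ⟨(e.trans σ).symm⟩⟩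
  · refine Finset.card_eq_zero.mpr (Finset.filter_eq_empty_iff.mpr fun i _ ⟨τ⟩ => hG ?_)
    have hrep_card : Nat.card (Fin (rep i).1) - Nat.card (rep i).2.ConnectedComponent = k := by
      rw [Nat.card_fin]
      exact (hrep i).2
    exact ⟨(hrep i).1.of_iso τ, τ.card_sub_card_connectedComponent_eq ▸ hrep_card⟩

open Classical in
theorem sum_subgraph_eq_sum_copyCount {R : Type*} [CommRing R] {k : ℕ} {ι : Type*} [Fintype ι]
    {rep : ι → Σ m : ℕ, SimpleGraph (Fin m)}
    (hrep : ∀ i, NoIsolated (rep i).2 ∧ (rep i).1 - Nat.card (rep i).2.ConnectedComponent = k)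
    (hrep' : ∀ (m : ℕ) (G : SimpleGraph (Fin m)), NoIsolated G →
      m - Nat.card G.ConnectedComponent = k → ∃! i : ι, Nonempty (G ≃g (rep i).2))
    [Fintype W] [DecidableEq W] (H : SimpleGraph W) [DecidableRel H.Adj] :
    ∑ G' : H.Subgraph with
      NoIsolated G'.coe ∧ Nat.card G'.verts - Nat.card G'.coe.ConnectedComponent = k,
      (-1 : R) ^ Nat.card G'.edgeSet =
    ∑ i, (-1 : R) ^ Nat.card (rep i).2.edgeSet * H.copyCount (rep i).2 := by
  calc _ = ∑ G' : H.Subgraph, ∑ i,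
        if Nonempty ((rep i).2 ≃g G'.coe) then (-1 : R) ^ Nat.card G'.edgeSet else 0 := by
        rw [Finset.sum_filter]
        refine Finset.sum_congr rfl fun G' _ => ?_
        rw [Finset.sum_ite, Finset.sum_const_zero, add_zero, Finset.sum_const,
          card_filter_nonempty_iso_rep hrep hrep']
        split_ifs <;> simp
    _ = ∑ i, ∑ G' : H.Subgraph,
        if Nonempty ((rep i).2 ≃g G'.coe) then (-1 : R) ^ Nat.card (rep i).2.edgeSet else 0 := by
        rw [Finset.sum_comm]
        refine Finset.sum_congr rfl fun i _ => Finset.sum_congr rfl fun G' _ => ?_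
        split_ifs with h
        · rw [h.some.card_edgeSet_eq, G'.card_edgeSet_coe]
        · rfl
    _ = _ := by
        refine Finset.sum_congr rfl fun i _ => ?_
        rw [Finset.sum_ite, Finset.sum_const_zero, add_zero, Finset.sum_const, nsmul_eq_mul,
          mul_comm, copyCount_eq_card_subtype,
          Nat.card_eq_fintype_card (α := {G' : H.Subgraph // _}), Fintype.card_subtype]

end SimpleGraph

/-- `e_k(H) = Σ_{[G] ∈ 𝒢(k)} (-1)^{|E(G)|+k} inj(G,H) / |Aut(G)|`, where the sum runs over
isomorphism classes of graphs without isolated vertices satisfying `|V(G)| - c(G) = k`,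
given by a finite system of representatives `rep : ι → Σ m, SimpleGraph (Fin m)`. -/
theorem chromatic_coefficient_eq_inj_sum {W : Type*} [Fintype W] (H : SimpleGraph W)
    (P : Polynomial ℚ)
    (hP : ∀ q : ℕ, P.eval (q : ℚ) = properColorings H q)
    (e : ℕ → ℚ)
    (he : ∀ k, e k = if k ≤ Fintype.card W then
      (-1 : ℚ) ^ k * P.coeff (Fintype.card W - k) else 0)
    (k : ℕ) (ι : Type) [Fintype ι] (rep : ι → Σ m : ℕ, SimpleGraph (Fin m))
    -- every representative lies in `𝒢(k)`:
    (hrep : ∀ i, NoIsolated (rep i).2 ∧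
      (rep i).1 - Nat.card (rep i).2.ConnectedComponent = k)
    -- every finite graph in `𝒢(k)` is isomorphic to exactly one representative:
    (hrep' : ∀ (m : ℕ) (G : SimpleGraph (Fin m)), NoIsolated G →
      m - Nat.card G.ConnectedComponent = k → ∃! i : ι, Nonempty (G ≃g (rep i).2)) :
    e k = ∑ i : ι,
      (-1 : ℚ) ^ (Nat.card (rep i).2.edgeSet + k) * (injCount (rep i).2 H : ℚ) /
        (Nat.card ((rep i).2 ≃g (rep i).2) : ℚ) := by
  classical
  calc e k = (-1) ^ k * ∑ G' : H.Subgraph with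
          NoIsolated G'.coe ∧ Nat.card G'.verts - Nat.card G'.coe.ConnectedComponent = k,
          (-1 : ℚ) ^ Nat.card G'.edgeSet := by
        rw [he]
        split_ifs with hk
        · rw [SimpleGraph.coeff_card_sub_eq_sum_subgraph H hP hk]
        · rw [Finset.sum_eq_zero fun G' hG' => absurd (Finset.mem_filter.mp hG').2.2 ?_, mul_zero]
          have : Nat.card G'.verts ≤ Fintype.card W :=
            Nat.card_eq_fintype_card (α := W) ▸ Finite.card_subtype_le _
          omega
    _ = _ := by
        rw [SimpleGraph.sum_subgraph_eq_sum_copyCount hrep hrep', Finset.mul_sum]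
        refine Finset.sum_congr rfl fun i _ => ?_
        rw [mul_div_assoc, SimpleGraph.injCount_div_card_iso, pow_add]
        ring
end

section
/- Let G, H be finite simple graphs. Then inj(G,H) = Σ over partitions P of V(G) into independent sets (i.e., no edge of G joins two vertices in the same class) of (-1)^{|V(G)|+|V(G/P)|} · (Π_{p∈P} (|p|-1)!) · hom(G/P, H), where G/P is the simple graph obtained by contracting each class of P and deleting multiple edges and loops. -/
open Finset
open scoped Classical

/-- The number of graph homomorphisms from `G` to `H`. -/
noncomputable def homCount {α β : Type*} (G : SimpleGraph α) (H : SimpleGraph β) : ℕ :=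
  Nat.card (G →g H)

/-- The quotient simple graph `G/P` of `G` by a partition `P` of its vertex set:
its vertices are the classes of `P`, two classes being adjacent iff they are distinct and
some edge of `G` joins them (multiple edges and loops are erased). -/
def quotGraph {V : Type*} [Fintype V] [DecidableEq V] (G : SimpleGraph V)
    (P : Finpartition (Finset.univ : Finset V)) :
    SimpleGraph {p // p ∈ P.parts} where
  Adj p q := p ≠ q ∧ ∃ x ∈ p.1, ∃ y ∈ q.1, G.Adj x y
  symm := by
    constructor
    rintro p q ⟨h, x, hx, y, hy, hxy⟩
    exact ⟨h.symm, y, hy, x, hx, hxy.symm⟩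
  loopless := by constructor; rintro p ⟨h, -⟩; exact h rfl

noncomputable instance {V : Type} [Fintype V] [DecidableEq V] :
    Fintype (Finpartition (Finset.univ : Finset V)) :=
  Fintype.ofInjective Finpartition.parts fun _ _ h => Finpartition.ext h

/-!
For a map `f : V → W`, give a part `p` of a partition of `V` the weight `(-1)^(|p|-1) (|p|-1)!`
if `f` is constant on `p` and `0` otherwise, and let `Z_f(s)` be the sum over all partitions
of `s` of the product of the weights of the parts. Adding a new point `a` to `s` either creates
the singleton part `{a}` (weight `1`) or enlarges some part `q`, which multiplies the weight of `q`
by `-|q|` if `f` is constant equal to `f a` on `q` and by `0` otherwise; the parts of the first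
kind cover the fibre of `f a` in `s`, so `Z_f(insert a s) = (1 - |f⁻¹(f a) ∩ s|) Z_f(s)`, and
hence `Z_f(s) = 1` if `f` is injective on `s` and `0` otherwise.

Summing `Z_f(V)` over all homomorphisms `f : G → H` counts the injective ones. Exchanging the
sums, a partition `P` contributes its sign and factorials times the number of homomorphisms
constant on the parts of `P`: none if a part contains an edge, and `hom(G/P, H)` otherwise.
-/

namespace Finpartition

variable {α : Type*} [DecidableEq α] {s : Finset α} {a : α}

lemma avoid_parts_eq_erase (P : Finpartition s) {q : Finset α}
    (hq : ∀ p ∈ P.parts, p ≠ q → Disjoint p q) : (P.avoid q).parts = P.parts.erase q := by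
  ext p
  simp only [mem_avoid, Finset.mem_erase]
  constructor
  · rintro ⟨d, hd, hdq, rfl⟩
    have hne : d ≠ q := by rintro rfl; exact hdq le_rfl
    rw [(hq d hd hne).sdiff_eq_left]
    exact ⟨hne, hd⟩
  · rintro ⟨hne, hp⟩
    exact ⟨p, hp, fun hle => P.ne_bot hp ((hq p hp hne).eq_bot_of_le hle),
      (hq p hp hne).sdiff_eq_left⟩

lemma sum_card_filter_parts (P : Finpartition s) (p : α → Prop) [DecidablePred p] :
    ∑ q ∈ P.parts, #{x ∈ q | p x} = #{x ∈ s | p x} := by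
  rw [← (P.restrict (filter_subset p s)).sum_card_parts, P.sum_restrict _ _ card_empty]
  refine sum_congr rfl fun q hq => ?_
  rw [inf_eq_inter, inter_filter, inter_eq_left.2 (P.le hq)]

lemma subset_of_mem_insert_empty_parts (P : Finpartition s) {q : Finset α}
    (hq : q ∈ insert ∅ P.parts) : q ⊆ s := by
  rcases Finset.mem_insert.1 hq with rfl | hq
  · exact Finset.empty_subset s
  · exact P.le hq

/-- For `q = ∅` the point `a` becomes a part of its own. -/
def insertInto (P : Finpartition s) (ha : a ∉ s) (q : Finset α) (hq : q ∈ insert ∅ P.parts) :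
    Finpartition (insert a s) :=
  (P.avoid q).extend (Finset.insert_ne_empty a q)
    (Finset.disjoint_insert_right.2 ⟨fun h => ha (Finset.mem_sdiff.1 h).1, sdiff_disjoint⟩)
    (by
      rw [Finset.sup_eq_union, Finset.union_insert,
        Finset.sdiff_union_of_subset (P.subset_of_mem_insert_empty_parts hq)])

lemma insertInto_parts (P : Finpartition s) (ha : a ∉ s) {q : Finset α}
    (hq : q ∈ insert ∅ P.parts) :
    (P.insertInto ha q hq).parts = insert (insert a q) (P.parts.erase q) := by
  rw [insertInto, extend_parts, avoid_parts_eq_erase]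
  intro p hp hpq
  rcases Finset.mem_insert.1 hq with rfl | hq
  · exact Finset.disjoint_empty_right p
  · exact P.disjoint hp hq hpq

def erase (P : Finpartition (insert a s)) (ha : a ∉ s) : Finpartition s :=
  (P.avoid {a}).copy (by rw [Finset.sdiff_singleton_eq_erase, Finset.erase_insert ha])

lemma mem_erase_parts (P : Finpartition (insert a s)) (ha : a ∉ s) {p : Finset α} :
    p ∈ (P.erase ha).parts ↔ p.Nonempty ∧ ∃ d ∈ P.parts, d.erase a = p := by
  simp only [erase, copy_parts, mem_avoid, Finset.sdiff_singleton_eq_erase,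
    Finset.subset_singleton_iff, ← Finset.erase_eq_empty_iff, ← Finset.nonempty_iff_ne_empty]
  constructor
  · rintro ⟨d, hd, hne, rfl⟩
    exact ⟨hne, d, hd, rfl⟩
  · rintro ⟨hne, d, hd, rfl⟩
    exact ⟨d, hd, hne, rfl⟩

lemma part_insertInto (P : Finpartition s) (ha : a ∉ s) {q : Finset α}
    (hq : q ∈ insert ∅ P.parts) : (P.insertInto ha q hq).part a = insert a q :=
  part_eq_of_mem _ (by rw [insertInto_parts]; exact Finset.mem_insert_self _ _)
    (Finset.mem_insert_self a q)

lemma erase_insertInto (P : Finpartition s) (ha : a ∉ s) {q : Finset α}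
    (hq : q ∈ insert ∅ P.parts) : (P.insertInto ha q hq).erase ha = P := by
  ext p
  rw [mem_erase_parts, insertInto_parts]
  have hqs := P.subset_of_mem_insert_empty_parts hq
  have : ∀ d ∈ P.parts, a ∉ d := fun d hd had => ha (P.le hd had)
  simp only [Finset.mem_insert, Finset.mem_erase] at hq ⊢
  constructor
  · rintro ⟨hp, d, hd | ⟨hdq, hd⟩, rfl⟩
    · rw [hd, Finset.erase_insert (fun h => ha (hqs h))] at hp ⊢
      exact hq.resolve_left hp.ne_empty
    · rwa [Finset.erase_eq_of_notMem (this d hd)]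
  · intro hp
    refine ⟨P.nonempty_of_mem_parts hp, ?_⟩
    by_cases hpq : p = q
    · exact ⟨insert a q, Or.inl rfl, by rw [hpq, Finset.erase_insert (fun h => ha (hqs h))]⟩
    · exact ⟨p, Or.inr ⟨hpq, hp⟩, Finset.erase_eq_of_notMem (this p hp)⟩

lemma part_erase_mem_insert_empty (P : Finpartition (insert a s)) (ha : a ∉ s) :
    (P.part a).erase a ∈ insert ∅ (P.erase ha).parts := by
  rcases ((P.part a).erase a).eq_empty_or_nonempty with h | h
  · rw [h]
    exact Finset.mem_insert_self _ _
  · exact Finset.mem_insert_of_mem ((P.mem_erase_parts ha).2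
      ⟨h, P.part a, P.part_mem.2 (Finset.mem_insert_self a s), rfl⟩)

lemma insertInto_erase (P : Finpartition (insert a s)) (ha : a ∉ s) :
    (P.erase ha).insertInto ha _ (P.part_erase_mem_insert_empty ha) = P := by
  have haP : a ∈ P.part a := P.mem_part_self.2 (Finset.mem_insert_self a s)
  have hpart : ∀ d ∈ P.parts, a ∈ d → d = P.part a := fun d hd had =>
    (P.part_eq_of_mem hd had).symm
  ext p
  rw [insertInto_parts, Finset.insert_erase haP, Finset.mem_insert, Finset.mem_erase,
    mem_erase_parts]
  constructor
  · rintro (rfl | ⟨hne, -, d, hd, rfl⟩)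
    · exact P.part_mem.2 (Finset.mem_insert_self a s)
    · have had : a ∉ d := fun had => hne (by rw [hpart d hd had])
      rwa [Finset.erase_eq_of_notMem had]
  · intro hp
    by_cases hpa : a ∈ p
    · exact Or.inl (hpart p hp hpa)
    refine Or.inr ⟨fun h => hpa ?_, P.nonempty_of_mem_parts hp, p, hp,
      Finset.erase_eq_of_notMem hpa⟩
    obtain ⟨x, hx⟩ := P.nonempty_of_mem_parts hp
    have hxa : x ∈ P.part a := Finset.mem_of_mem_erase (h ▸ hx)
    rw [P.eq_of_mem_parts hp (P.part_mem.2 (Finset.mem_insert_self a s)) hx hxa]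
    exact haP

def insertEquiv (ha : a ∉ s) :
    (Σ P : Finpartition s, {q // q ∈ insert ∅ P.parts}) ≃ Finpartition (insert a s) where
  toFun x := x.1.insertInto ha x.2 x.2.2
  invFun P := ⟨P.erase ha, (P.part a).erase a, P.part_erase_mem_insert_empty ha⟩
  left_inv x := by
    refine Sigma.subtype_ext (erase_insertInto _ ha _) ?_
    dsimp only
    rw [part_insertInto,
      Finset.erase_insert fun h => ha (x.1.subset_of_mem_insert_empty_parts x.2.2 h)]
  right_inv P := insertInto_erase P ha

theorem sum_prod_parts_insert {R : Type*} [CommSemiring R] (c : Finset α → R) (ha : a ∉ s) :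
    ∑ P : Finpartition (insert a s), ∏ p ∈ P.parts, c p =
      ∑ P : Finpartition s,
        ∑ q ∈ insert ∅ P.parts, c (insert a q) * ∏ p ∈ P.parts.erase q, c p := by
  rw [← (insertEquiv ha).sum_comp, Fintype.sum_sigma]
  refine Fintype.sum_congr _ _ fun P => ?_
  rw [← Finset.sum_coe_sort (insert ∅ P.parts)]
  refine Fintype.sum_congr _ _ fun q => ?_
  have hq : insert a q.1 ∉ P.parts.erase q := fun h =>
    ha (P.le (Finset.mem_of_mem_erase h) (Finset.mem_insert_self a q))
  rw [insertEquiv, Equiv.coe_fn_mk, insertInto_parts, Finset.prod_insert hq]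

end Finpartition

section MobiusWeight

variable {V W : Type*} (f : V → W)

/-- `(-1)^(k-1) (k-1)!` is the Möbius function of the lattice of partitions of a `k`-set. -/
noncomputable def mobiusWeight (p : Finset V) : ℤ :=
  if ∀ x ∈ p, ∀ y ∈ p, f x = f y then (-1) ^ (#p + 1) * (#p - 1).factorial else 0

lemma mobiusWeight_eq_zero {p : Finset V} {x y : V} (hx : x ∈ p) (hy : y ∈ p) (hxy : f x ≠ f y) :
    mobiusWeight f p = 0 :=
  if_neg fun h => hxy (h x hx y hy)

lemma mobiusWeight_singleton (a : V) : mobiusWeight f {a} = 1 := by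
  simp [mobiusWeight]

lemma mobiusWeight_insert [DecidableEq V] {a : V} {q : Finset V} (ha : a ∉ q) (hq : q.Nonempty) :
    mobiusWeight f (insert a q) = -#{x ∈ q | f x = f a} * mobiusWeight f q := by
  by_cases hqa : ∀ x ∈ q, f x = f a
  · obtain ⟨k, hk⟩ : ∃ k, #q = k + 1 := Nat.exists_eq_add_one.2 hq.card_pos
    have hall : ∀ x ∈ insert a q, f x = f a := (forall_mem_insert _ _ _).2 ⟨rfl, hqa⟩
    rw [mobiusWeight, mobiusWeight, if_pos fun x hx y hy => (hall x hx).trans (hall y hy).symm,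
      if_pos fun x hx y hy => (hqa x hx).trans (hqa y hy).symm, filter_true_of_mem hqa,
      card_insert_of_notMem ha, hk]
    push_cast [Nat.add_sub_cancel, Nat.factorial_succ]
    ring
  · push Not at hqa
    obtain ⟨x, hx, hxa⟩ := hqa
    have hins : ¬ ∀ y ∈ insert a q, ∀ z ∈ insert a q, f y = f z := fun h =>
      hxa (h x (mem_insert_of_mem hx) a (mem_insert_self a q))
    rw [mobiusWeight, if_neg hins, mobiusWeight]
    split_ifs with hconst
    · rw [filter_false_of_mem fun y hy hya => hxa ((hconst x hx y hy).trans hya)]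
      simp
    · rw [mul_zero]

lemma sum_insert_mobiusWeight [DecidableEq V] {s : Finset V} {a : V} (ha : a ∉ s)
    (P : Finpartition s) :
    ∑ q ∈ insert ∅ P.parts, mobiusWeight f (insert a q) * ∏ p ∈ P.parts.erase q, mobiusWeight f p =
      (1 - #{x ∈ s | f x = f a}) * ∏ p ∈ P.parts, mobiusWeight f p := by
  have hjoin : ∀ q ∈ P.parts,
      mobiusWeight f (insert a q) * ∏ p ∈ P.parts.erase q, mobiusWeight f p =
      -#{x ∈ q | f x = f a} * ∏ p ∈ P.parts, mobiusWeight f p := fun q hq => by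
    have haq : a ∉ q := fun h => ha (P.le hq h)
    rw [← mul_prod_erase _ _ hq, mobiusWeight_insert f haq (P.nonempty_of_mem_parts hq), mul_assoc]
  rw [sum_insert P.empty_notMem_parts, sum_congr rfl hjoin, ← sum_mul, ← P.sum_card_filter_parts,
    insert_empty_eq, mobiusWeight_singleton, erase_eq_of_notMem P.empty_notMem_parts]
  push_cast
  rw [sum_neg_distrib]
  ring

lemma prod_mobiusWeight [DecidableEq V] {s : Finset V} (P : Finpartition s) :
    ∏ p ∈ P.parts, mobiusWeight f p =
      if ∀ p ∈ P.parts, ∀ x ∈ p, ∀ y ∈ p, f x = f y then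
        (-1) ^ (#s + #P.parts) * ((∏ p ∈ P.parts, (#p - 1).factorial : ℕ) : ℤ)
      else 0 := by
  simp only [mobiusWeight]
  rw [prod_ite_zero, prod_mul_distrib, prod_pow_eq_pow_sum, sum_add_distrib, P.sum_card_parts,
    ← card_eq_sum_ones, Nat.cast_prod]

theorem sum_prod_mobiusWeight [DecidableEq V] (s : Finset V) :
    ∑ P : Finpartition s, ∏ p ∈ P.parts, mobiusWeight f p = if Set.InjOn f s then 1 else 0 := by
  induction s using Finset.induction_on with
  | empty =>
    change ∑ P : Finpartition (⊥ : Finset V), _ = _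
    rw [Fintype.sum_unique, Finpartition.parts_eq_empty_iff.2 rfl, prod_empty]
    simp
  | insert a s ha ih =>
    simp_rw [Finpartition.sum_prod_parts_insert _ ha, sum_insert_mobiusWeight f ha, ← mul_sum, ih,
      coe_insert, Set.injOn_insert (mem_coe.not.2 ha)]
    by_cases hinj : Set.InjOn f s
    · have hfiber : #{x ∈ s | f x = f a} ≤ 1 := card_le_one.2 fun x hx y hy => by
        rw [mem_filter] at hx hy
        exact hinj hx.1 hy.1 (hx.2.trans hy.2.symm)
      have himage : f a ∈ f '' s ↔ 0 < #{x ∈ s | f x = f a} := by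
        simp [card_pos, filter_nonempty_iff]
      rw [if_pos hinj, mul_one]
      split_ifs <;> grind
    · simp [hinj]

end MobiusWeight

section Quotient

variable {V W : Type*} [Fintype V] [DecidableEq V] {G : SimpleGraph V}
  {P : Finpartition (univ : Finset V)}

variable (G P) in
def IsAdmissible : Prop :=
  ∀ p ∈ P.parts, ∀ x ∈ p, ∀ y ∈ p, ¬ G.Adj x y

def quotProj (hP : IsAdmissible G P) : G →g quotGraph G P where
  toFun v := ⟨P.part v, P.part_mem.2 (mem_univ v)⟩
  map_rel' {x y} hxy := by
    refine ⟨fun h => ?_, x, P.mem_part (mem_univ x), y, P.mem_part (mem_univ y), hxy⟩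
    have hy : y ∈ P.part x := by
      rw [show P.part x = P.part y from congrArg Subtype.val h]
      exact P.mem_part (mem_univ y)
    exact hP _ (P.part_mem.2 (mem_univ x)) x (P.mem_part (mem_univ x)) y hy hxy

lemma quotProj_eq_iff (hP : IsAdmissible G P) {v : V} {q : {p // p ∈ P.parts}} :
    quotProj hP v = q ↔ v ∈ q.1 :=
  ⟨fun h => h ▸ P.mem_part (mem_univ v), fun h => Subtype.ext (P.part_eq_of_mem q.2 h)⟩

lemma quotProj_surjective (hP : IsAdmissible G P) : Function.Surjective (quotProj hP) :=
  fun q => by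
    obtain ⟨x, hx⟩ := P.nonempty_of_mem_parts q.2
    exact ⟨x, (quotProj_eq_iff hP).2 hx⟩

lemma prod_mobiusWeight_eq_zero_of_not_isAdmissible (hP : ¬ IsAdmissible G P)
    {H : SimpleGraph W} (f : G →g H) : ∏ p ∈ P.parts, mobiusWeight f p = 0 := by
  obtain ⟨p, hp, x, hx, y, hy, hxy⟩ : ∃ p ∈ P.parts, ∃ x ∈ p, ∃ y ∈ p, G.Adj x y := by
    simpa [IsAdmissible] using hP
  exact prod_eq_zero hp (mobiusWeight_eq_zero f hx hy (f.map_adj hxy).ne)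

variable [Fintype W] (H : SimpleGraph W)

noncomputable def quotGraphHomEquiv (hP : IsAdmissible G P) :
    (quotGraph G P →g H) ≃ {f : G →g H // ∀ p ∈ P.parts, ∀ x ∈ p, ∀ y ∈ p, f x = f y} where
  toFun g := ⟨g.comp (quotProj hP), fun p hp x hx y hy => by
    simp only [SimpleGraph.Hom.coe_comp, Function.comp_apply,
      (quotProj_eq_iff hP (q := ⟨p, hp⟩)).2 hx, (quotProj_eq_iff hP (q := ⟨p, hp⟩)).2 hy]⟩
  invFun f :=
    { toFun := fun q => f.1 (Function.surjInv (quotProj_surjective hP) q)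
      map_rel' := by
        rintro q r ⟨-, x, hx, y, hy, hxy⟩
        have hq := (quotProj_eq_iff hP).1 (Function.surjInv_eq (quotProj_surjective hP) q)
        have hr := (quotProj_eq_iff hP).1 (Function.surjInv_eq (quotProj_surjective hP) r)
        rw [f.2 q.1 q.2 _ hq x hx, f.2 r.1 r.2 _ hr y hy]
        exact f.1.map_adj hxy }
  left_inv g := by
    ext q
    exact congrArg g (Function.surjInv_eq (quotProj_surjective hP) q)
  right_inv f := by
    ext v
    exact f.2 _ (quotProj hP v).2 _
      ((quotProj_eq_iff hP).1 (Function.surjInv_eq (quotProj_surjective hP) _)) v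
      ((quotProj_eq_iff hP).1 rfl)

lemma homCount_quotGraph (hP : IsAdmissible G P) :
    homCount (quotGraph G P) H = #{f : G →g H | ∀ p ∈ P.parts, ∀ x ∈ p, ∀ y ∈ p, f x = f y} := by
  rw [homCount, Nat.card_congr (quotGraphHomEquiv H hP), Nat.card_eq_fintype_card,
    Fintype.card_subtype]

lemma injCount_eq_card_filter :
    injCount G H = #{f : G →g H | Function.Injective f} := by
  rw [injCount, Nat.card_eq_fintype_card, Fintype.card_subtype]

lemma sum_hom_prod_mobiusWeight (hP : IsAdmissible G P) :
    ∑ f : G →g H, ∏ p ∈ P.parts, mobiusWeight f p =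
      (-1) ^ (Fintype.card V + #P.parts) * ((∏ p ∈ P.parts, (#p - 1).factorial : ℕ) : ℤ) *
        homCount (quotGraph G P) H := by
  simp_rw [prod_mobiusWeight, card_univ]
  rw [homCount_quotGraph H hP, card_filter, Nat.cast_sum, mul_sum]
  refine sum_congr rfl fun f _ => ?_
  split_ifs <;> simp

end Quotient

/-- `inj(G,H) = Σ_P (-1)^{|V(G)|+|V(G/P)|} (Π_{p∈P} (|p|-1)!) hom(G/P,H)`, where the sum runs
over all partitions `P` of `V(G)` into independent sets. -/
theorem injCount_eq_sum_partitions {V W : Type} [Fintype V] [DecidableEq V] [Fintype W]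
    (G : SimpleGraph V) (H : SimpleGraph W) :
    (injCount G H : ℤ) =
      ∑ P ∈ Finset.univ.filter
          (fun P : Finpartition (Finset.univ : Finset V) =>
            ∀ p ∈ P.parts, ∀ x ∈ p, ∀ y ∈ p, ¬ G.Adj x y),
        (-1 : ℤ) ^ (Fintype.card V + P.parts.card) *
          ((∏ p ∈ P.parts, Nat.factorial (p.card - 1) : ℕ) : ℤ) * homCount (quotGraph G P) H := by
  calc (injCount G H : ℤ)
      = ∑ f : G →g H, ∑ P : Finpartition (univ : Finset V), ∏ p ∈ P.parts, mobiusWeight f p := by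
        rw [injCount_eq_card_filter, card_filter]
        push_cast
        refine sum_congr rfl fun f _ => ?_
        -- `convert` reconciles two `Fintype (Finpartition univ)` instances
        convert (sum_prod_mobiusWeight (⇑f) univ).symm
        rw [coe_univ, Set.injOn_univ]
    _ = ∑ P : Finpartition (univ : Finset V), ∑ f : G →g H, ∏ p ∈ P.parts, mobiusWeight f p :=
        sum_comm
    _ = ∑ P ∈ univ.filter (fun P : Finpartition (univ : Finset V) =>
            ∀ p ∈ P.parts, ∀ x ∈ p, ∀ y ∈ p, ¬ G.Adj x y),
          ∑ f : G →g H, ∏ p ∈ P.parts, mobiusWeight f p :=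
        (sum_subset (filter_subset _ _) fun P _ hP => sum_eq_zero fun f _ =>
          prod_mobiusWeight_eq_zero_of_not_isAdmissible
            (fun h => hP (by simpa [IsAdmissible] using h)) f).symm
    _ = _ := sum_congr rfl fun P hP => sum_hom_prod_mobiusWeight H (mem_filter.1 hP).2
end
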